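/- arXiv:2312.07479 — 2 statements merged into one kernel-verified Lean document; each statement's English description precedes it below -/
import Mathlib

section
/- Fix β > 1, α ≥ 1, κ̄ > 1, and θ̄ ∈ (0,1). The unique minimizer θ̂ of f̄(θ) = θ̄^(β−1)/((β−1)θ^(β−1)) + κ̄θ^α/α − (κ̄−1)log θ satisfies θ̄ < θ̂ < 1. -/
/-!
At an interior minimizer `θ̂` the derivative of `f̄` vanishes, and `θ · f̄'(θ)` is the residual
`g(θ) = 1 - (θ̄/θ)^(β-1) + κ̄(θ^α - 1)` of the first-order condition. Since `g` is strictly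
increasing on `(0, ∞)` with `g(θ̄) = κ̄(θ̄^α - 1) < 0 < 1 - θ̄^(β-1) = g(1)`, its zero `θ̂` lies
strictly between `θ̄` and `1`.
-/

open Set Real

namespace Fbar

noncomputable def fbar (β α κ θbar θ : ℝ) : ℝ :=
  θbar ^ (β - 1) / ((β - 1) * θ ^ (β - 1)) + κ * θ ^ α / α - (κ - 1) * Real.log θ

noncomputable def focResidual (β α κ θbar θ : ℝ) : ℝ :=
  1 - (θbar / θ) ^ (β - 1) + κ * (θ ^ α - 1)

variable {β α κ θbar : ℝ}

theorem hasDerivAt_fbar (hβ : β ≠ 1) (hα : α ≠ 0) (hθbar : 0 ≤ θbar) {θ : ℝ} (hθ : 0 < θ) :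
    HasDerivAt (fbar β α κ θbar) (focResidual β α κ θbar θ / θ) θ := by
  have hden : HasDerivAt (fun t => (β - 1) * t ^ (β - 1))
      ((β - 1) * ((β - 1) * θ ^ (β - 1 - 1))) θ :=
    (hasDerivAt_rpow_const (Or.inl hθ.ne')).const_mul _
  have hfirst := (hasDerivAt_const θ (θbar ^ (β - 1))).div hden (by positivity)
  have hsecond : HasDerivAt (fun t => κ * t ^ α / α) (κ * (α * θ ^ (α - 1)) / α) θ :=
    ((hasDerivAt_rpow_const (Or.inl hθ.ne')).const_mul κ).div_const α
  have hthird := (hasDerivAt_log hθ.ne').const_mul (κ - 1)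
  refine HasDerivAt.congr_deriv (f := fbar β α κ θbar) ((hfirst.add hsecond).sub hthird) ?_
  rw [focResidual, div_rpow hθbar hθ.le, rpow_sub_one hθ.ne' (β - 1), rpow_sub_one hθ.ne' α]
  field_simp
  ring

theorem focResidual_strictMonoOn (hβ : 1 ≤ β) (hα : 0 < α) (hκ : 0 < κ) (hθbar : 0 ≤ θbar) :
    StrictMonoOn (focResidual β α κ θbar) (Ioi 0) := by
  intro x hx y hy hxy
  have hpow : x ^ α < y ^ α := rpow_lt_rpow (le_of_lt hx) hxy hα
  have hratio : (θbar / y) ^ (β - 1) ≤ (θbar / x) ^ (β - 1) :=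
    rpow_le_rpow (div_nonneg hθbar (le_of_lt hy)) (div_le_div_of_nonneg_left hθbar hx hxy.le)
      (sub_nonneg.mpr hβ)
  simp only [focResidual]
  nlinarith

theorem focResidual_self_neg (hα : 0 < α) (hκ : 0 < κ) (hθbar0 : 0 < θbar) (hθbar1 : θbar < 1) :
    focResidual β α κ θbar θbar < 0 := by
  have : θbar ^ α < 1 := rpow_lt_one hθbar0.le hθbar1 hα
  simp only [focResidual, div_self hθbar0.ne', one_rpow]
  nlinarith

theorem focResidual_one_pos (hβ : 1 < β) (hθbar0 : 0 ≤ θbar) (hθbar1 : θbar < 1) :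
    0 < focResidual β α κ θbar 1 := by
  have : θbar ^ (β - 1) < 1 := rpow_lt_one hθbar0 hθbar1 (sub_pos.mpr hβ)
  simp only [focResidual, div_one, one_rpow]
  linarith

theorem focResidual_eq_zero_of_isLocalMin (hβ : β ≠ 1) (hα : α ≠ 0) (hθbar : 0 ≤ θbar) {θ : ℝ}
    (hθ : 0 < θ) (hmin : IsLocalMin (fbar β α κ θbar) θ) : focResidual β α κ θbar θ = 0 := by
  have hderiv := hmin.hasDerivAt_eq_zero (hasDerivAt_fbar hβ hα hθbar hθ)
  exact (div_eq_zero_iff.mp hderiv).resolve_right hθ.ne'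

end Fbar

open Fbar in
/-- When `θ̄ ∈ (0,1)`, the minimizer `θ̂` of `f̄` over `(0,∞)` satisfies `θ̄ < θ̂ < 1`. -/
theorem fbar_minimizer_between_thetabar_and_one (β α κ θbar θhat : ℝ)
    (hβ : 1 < β) (hα : 1 ≤ α) (hκ : 1 < κ) (hθbar0 : 0 < θbar) (hθbar1 : θbar < 1)
    (hθhat : θhat ∈ Set.Ioi (0 : ℝ))
    (hmin : ∀ θ ∈ Set.Ioi (0 : ℝ),
      θbar ^ (β - 1) / ((β - 1) * θhat ^ (β - 1)) + κ * θhat ^ α / α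
          - (κ - 1) * Real.log θhat ≤
        θbar ^ (β - 1) / ((β - 1) * θ ^ (β - 1)) + κ * θ ^ α / α
          - (κ - 1) * Real.log θ) :
    θbar < θhat ∧ θhat < 1 := by
  have hα0 : 0 < α := by linarith
  have hlocal : IsLocalMin (fbar β α κ θbar) θhat :=
    Filter.eventually_of_mem (Ioi_mem_nhds hθhat) hmin
  have hfoc : focResidual β α κ θbar θhat = 0 :=
    focResidual_eq_zero_of_isLocalMin hβ.ne' hα0.ne' hθbar0.le hθhat hlocal
  have hmono := focResidual_strictMonoOn hβ.le hα0 (by linarith : 0 < κ) hθbar0.le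
  constructor
  · rw [← hmono.lt_iff_lt hθbar0 hθhat, hfoc]
    exact focResidual_self_neg hα0 (by linarith) hθbar0 hθbar1
  · rw [← hmono.lt_iff_lt hθhat (mem_Ioi.mpr one_pos), hfoc]
    exact focResidual_one_pos hβ hθbar0.le hθbar1
end

section
/- Fix β > 1, θ̄ = 1, α ≥ 1, κ̄ > 1, K ≥ 1, and η = (αβ/(K(β−1)κ̄))^(1/α). Then the function f̄(θ) = 1/((β−1)θ^(β−1)) + βθ^α/(K(β−1)η^α) − (κ̄−1)log θ is decreasing on (0,1] and increasing on [1,∞); in particular its minimum over (0,∞) is attained at θ = 1. -/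
/-!
With this choice of `η` the coefficient `β / (K (β - 1) η ^ α)` collapses to `κ / α`, so that
`f̄ θ = θ ^ (1 - β) / (β - 1) + (κ / α) θ ^ α - (κ - 1) log θ` and
`θ f̄' θ = κ (θ ^ α - 1) + (1 - θ ^ (1 - β))`. Both summands have the sign of `θ - 1`.
-/

open Real Set

theorem AntitoneOn.le_of_monotoneOn_Ici {α β : Type*} [LinearOrder α] [Preorder β] {f : α → β}
    {a b x : α} (hab : a < b) (hanti : AntitoneOn f (Ioc a b)) (hmono : MonotoneOn f (Ici b))
    (hx : a < x) : f b ≤ f x := by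
  rcases le_total x b with hxb | hbx
  · exact hanti ⟨hx, hxb⟩ ⟨hab, le_rfl⟩ hxb
  · exact hmono le_rfl hbx hbx

theorem antitoneOn_Ioc_of_hasDerivAt_nonpos {g g' : ℝ → ℝ} {a b : ℝ}
    (hg : ∀ x ∈ Ioc a b, HasDerivAt g (g' x) x) (hg' : ∀ x ∈ Ioo a b, g' x ≤ 0) :
    AntitoneOn g (Ioc a b) := by
  refine antitoneOn_of_hasDerivWithinAt_nonpos (convex_Ioc a b)
    (fun x hx ↦ (hg x hx).continuousAt.continuousWithinAt) (fun x hx ↦ ?_) (by simpa using hg')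
  rw [interior_Ioc] at hx ⊢
  exact (hg x (Ioo_subset_Ioc_self hx)).hasDerivWithinAt

theorem monotoneOn_Ici_of_hasDerivAt_nonneg {g g' : ℝ → ℝ} {a : ℝ}
    (hg : ∀ x ∈ Ici a, HasDerivAt g (g' x) x) (hg' : ∀ x ∈ Ioi a, 0 ≤ g' x) :
    MonotoneOn g (Ici a) := by
  refine monotoneOn_of_hasDerivWithinAt_nonneg (convex_Ici a)
    (fun x hx ↦ (hg x hx).continuousAt.continuousWithinAt) (fun x hx ↦ ?_) (by simpa using hg')
  rw [interior_Ici] at hx ⊢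
  exact (hg x (Ioi_subset_Ici_self hx)).hasDerivWithinAt

namespace Fbar

/-- `f̄` after substituting `η ^ α = α β / (K (β - 1) κ)`. -/
noncomputable def reduced (β α κ θ : ℝ) : ℝ :=
  (β - 1)⁻¹ * θ ^ (1 - β) + κ / α * θ ^ α - (κ - 1) * log θ

variable {β α κ x : ℝ}

theorem hasDerivAt_reduced (hβ : β ≠ 1) (hα : α ≠ 0) (hx : 0 < x) :
    HasDerivAt (reduced β α κ) ((κ * (x ^ α - 1) + (1 - x ^ (1 - β))) / x) x := by
  have h := (((hasDerivAt_rpow_const (p := 1 - β) (Or.inl hx.ne')).const_mul (β - 1)⁻¹).add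
    ((hasDerivAt_rpow_const (p := α) (Or.inl hx.ne')).const_mul (κ / α))).sub
    ((hasDerivAt_log hx.ne').const_mul (κ - 1))
  refine h.congr_deriv ?_
  have hβ' : β - 1 ≠ 0 := sub_ne_zero.mpr hβ
  rw [rpow_sub_one hx.ne', rpow_sub_one hx.ne']
  field_simp
  ring

theorem deriv_numerator_nonpos (hβ : 1 ≤ β) (hα : 0 ≤ α) (hκ : 0 ≤ κ) (hx : 0 < x)
    (hx1 : x ≤ 1) : κ * (x ^ α - 1) + (1 - x ^ (1 - β)) ≤ 0 := by
  have h₁ : x ^ α ≤ 1 := rpow_le_one hx.le hx1 hα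
  have h₂ : 1 ≤ x ^ (1 - β) := one_le_rpow_of_pos_of_le_one_of_nonpos hx hx1 (by linarith)
  nlinarith

theorem deriv_numerator_nonneg (hβ : 1 ≤ β) (hα : 0 ≤ α) (hκ : 0 ≤ κ) (hx : 1 ≤ x) :
    0 ≤ κ * (x ^ α - 1) + (1 - x ^ (1 - β)) := by
  have h₁ : 1 ≤ x ^ α := one_le_rpow hx hα
  have h₂ : x ^ (1 - β) ≤ 1 := rpow_le_one_of_one_le_of_nonpos hx (by linarith)
  nlinarith

theorem antitoneOn_reduced (hβ : 1 < β) (hα : 0 < α) (hκ : 0 ≤ κ) :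
    AntitoneOn (reduced β α κ) (Ioc 0 1) :=
  antitoneOn_Ioc_of_hasDerivAt_nonpos (fun _ hx ↦ hasDerivAt_reduced hβ.ne' hα.ne' hx.1)
    fun _ hx ↦ div_nonpos_of_nonpos_of_nonneg
      (deriv_numerator_nonpos hβ.le hα.le hκ hx.1 hx.2.le) hx.1.le

theorem monotoneOn_reduced (hβ : 1 < β) (hα : 0 < α) (hκ : 0 ≤ κ) :
    MonotoneOn (reduced β α κ) (Ici 1) :=
  monotoneOn_Ici_of_hasDerivAt_nonneg
    (fun _ hx ↦ hasDerivAt_reduced hβ.ne' hα.ne' (zero_lt_one.trans_le hx))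
    fun _ hx ↦ div_nonneg (deriv_numerator_nonneg hβ.le hα.le hκ (le_of_lt hx))
      (zero_lt_one.trans hx).le

end Fbar

/-- In the unperturbed case `θ̄ = 1`, with the optimal scale
`η = (αβ/(K(β−1)κ̄))^(1/α)`, the function `f̄` is decreasing on `(0,1]` and
increasing on `[1,∞)`; in particular its minimum over `(0,∞)` is attained at `θ = 1`. -/
theorem fbar_min_at_one (β α κ K : ℝ)
    (hβ : 1 < β) (hα : 1 ≤ α) (hκ : 1 < κ) (hK : 1 ≤ K) :
    letI η : ℝ := (α * β / (K * (β - 1) * κ)) ^ (1 / α)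
    letI f : ℝ → ℝ := fun θ =>
      1 / ((β - 1) * θ ^ (β - 1)) + β * θ ^ α / (K * (β - 1) * η ^ α)
        - (κ - 1) * Real.log θ
    AntitoneOn f (Set.Ioc (0 : ℝ) 1) ∧ MonotoneOn f (Set.Ici (1 : ℝ)) ∧
      ∀ θ ∈ Set.Ioi (0 : ℝ), f 1 ≤ f θ := by
  set η : ℝ := (α * β / (K * (β - 1) * κ)) ^ (1 / α)
  set f : ℝ → ℝ := fun θ =>
    1 / ((β - 1) * θ ^ (β - 1)) + β * θ ^ α / (K * (β - 1) * η ^ α) - (κ - 1) * log θ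
  have hα₀ : 0 < α := zero_lt_one.trans_le hα
  have hβ₁ : 0 < β - 1 := sub_pos.mpr hβ
  have hκ₀ : 0 < κ := zero_lt_one.trans hκ
  have hK₀ : 0 < K := zero_lt_one.trans_le hK
  have hη : η ^ α = α * β / (K * (β - 1) * κ) := by
    simp only [η, one_div]
    exact rpow_inv_rpow (by positivity) hα₀.ne'
  have hf : EqOn (Fbar.reduced β α κ) f (Ioi 0) := fun θ hθ ↦ by
    have hθ' : θ ^ (1 - β) = (θ ^ (β - 1))⁻¹ := by
      rw [← rpow_neg hθ.le, neg_sub]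
    have hθβ : 0 < θ ^ (β - 1) := rpow_pos_of_pos hθ _
    simp only [f, Fbar.reduced, hη, hθ']
    field_simp
  have hanti := (Fbar.antitoneOn_reduced hβ hα₀ hκ₀.le).congr
    (hf.mono Ioc_subset_Ioi_self)
  have hmono := (Fbar.monotoneOn_reduced hβ hα₀ hκ₀.le).congr
    (hf.mono (Ici_subset_Ioi.mpr zero_lt_one))
  exact ⟨hanti, hmono, fun θ hθ ↦ hanti.le_of_monotoneOn_Ici zero_lt_one hmono hθ⟩
end
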